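/- Let h > 0, let u⁰ : ℤ → ℝ³ satisfy |u⁰(i)| = 1 for all i and D⁺u⁰ ∈ L²_h, and let g ∈ W^{1,∞}(ℝ₊, L^∞(ℝ)) satisfy α ≤ g ≤ β with ‖∂_t g‖_{L^∞} ≤ β₁, for constants α > 0, β, β₁; set g_h(t,i) = g(t, ih). Then any C¹ solution u of the semi-discrete system du/dt(t,i) = u(t,i) ∧ D⁺(g_h(t,·) D⁻u(t,·))(i) with u(0) = u⁰, |u(t,i)| = 1 and D⁺u(t) ∈ L²_h satisfies, for all t ≥ 0, |D⁺u(t)|_h ≤ √(β/α) |D⁺u⁰|_h exp(β₁ t/(2α)). -/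

import Mathlib

/-!
The weighted energy `F(t) = ∑ⱼ g_h(t,j) |D⁻u(t,j)|²` satisfies
`α |D⁺u(t)|²_h ≤ h F(t) ≤ β |D⁺u(t)|²_h`, and only the time dependence of the weights makes it
grow: for frozen weights, summation by parts turns `∑ⱼ g_h ⟪D⁻u, D⁻∂ₜu⟫` into
`-∑ᵢ ⟪D⁺ψ(i), u(i) ∧ D⁺ψ(i)⟫ = 0` with `ψ = g_h D⁻u`. Since `g` is only Lipschitz in `t`, `F` is
not differentiated; instead `F(t) ≤ (1 + β₁(t-s)/α) F(s) + C (t-s)²`, and iterating this over a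
fine partition of `[0,t]` gives `F(t) ≤ F(0) exp(β₁ t/α)`. The constant `C`, and the termwise
integration in time of the series, rest on a crude `h`-dependent bound on `∑ⱼ |D⁻u(t,j)|²` over
bounded time intervals, obtained from Grönwall's inequality for its partial sums.
-/

open MeasureTheory Set Filter

noncomputable section

abbrev E3 : Type := EuclideanSpace ℝ (Fin 3)

def dotE (a b : E3) : ℝ := inner ℝ a b

/-- Forward difference operator `D⁺v(i) = (v(i+1) − v(i))/h`. -/
def Dp (h : ℝ) (v : ℤ → E3) (i : ℤ) : E3 := h⁻¹ • (v (i + 1) - v i)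

/-- Backward difference operator `D⁻v(i) = (v(i) − v(i−1))/h`. -/
def Dm (h : ℝ) (v : ℤ → E3) (i : ℤ) : E3 := h⁻¹ • (v i - v (i - 1))

/-- Discrete `L²ₕ` norm: `|v|ₕ = (h ∑ᵢ |v(i)|²)^{1/2}`. -/
def normh (h : ℝ) (v : ℤ → E3) : ℝ := Real.sqrt (h * ∑' i : ℤ, ‖v i‖ ^ 2)

/-- Piecewise affine interpolation of a grid function on the grid `xᵢ = i h`. -/
def Ph (h : ℝ) (v : ℤ → E3) (x : ℝ) : E3 :=
  v ⌊x / h⌋ + (x - (⌊x / h⌋ : ℤ) * h) • Dp h v ⌊x / h⌋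

/-- Piecewise constant interpolation of a grid function on the grid `xᵢ = i h`. -/
def Qh (h : ℝ) (v : ℤ → E3) (x : ℝ) : E3 := v ⌊x / h⌋

def cross (a b : E3) : E3 :=
  (WithLp.equiv 2 (Fin 3 → ℝ)).symm
    (crossProduct ((WithLp.equiv 2 (Fin 3 → ℝ)) a) ((WithLp.equiv 2 (Fin 3 → ℝ)) b))

/-- Right-hand side of the semi-discrete system:
`u(i) ∧ D⁺(g_h(t,·) D⁻ w)(i)` with `g_h(t,j) = g(t, j h)`. -/
def rhsD (g : ℝ → ℝ → ℝ) (h : ℝ) (w : ℤ → E3) (t : ℝ) (i : ℤ) : E3 :=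
  cross (w i) (Dp h (fun j : ℤ => g t ((j : ℝ) * h) • Dm h w j) i)

open Topology Interval
open scoped RealInnerProductSpace

lemma inner_cross_self_right (a b : E3) : ⟪b, cross a b⟫ = 0 := by
  simp only [cross, EuclideanSpace.inner_eq_star_dotProduct]
  simp [dotProduct_comm _ (WithLp.ofLp b), dot_cross_self]

lemma norm_cross_le (a b : E3) : ‖cross a b‖ ≤ ‖a‖ * ‖b‖ := by
  have h := InnerProductGeometry.norm_ofLp_crossProduct a b
  have : cross a b = WithLp.toLp 2 (crossProduct (WithLp.ofLp a) (WithLp.ofLp b)) := rfl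
  rw [this, h]
  exact mul_le_of_le_one_right (by positivity) (Real.sin_le_one _)

lemma memℓp_two_iff {α E : Type*} [NormedAddCommGroup E] {f : α → E} :
    Memℓp f 2 ↔ Summable fun i => ‖f i‖ ^ 2 := by
  rw [memℓp_gen_iff (by norm_num)]; norm_num

lemma Memℓp.comp_add_right {G E : Type*} [AddGroup G] [NormedAddCommGroup E]
    {p : ENNReal} (hp : 0 < p.toReal) {f : G → E} (hf : Memℓp f p) (c : G) :
    Memℓp (fun i => f (i + c)) p :=
  (memℓp_gen_iff hp).2 <|
    (Equiv.addRight c).summable_iff (f := fun i => ‖f i‖ ^ p.toReal) |>.2 (hf.summable hp)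

lemma Memℓp.summable_inner {α F : Type*} [NormedAddCommGroup F] [InnerProductSpace ℝ F]
    {f g : α → F} (hf : Memℓp f 2) (hg : Memℓp g 2) : Summable fun i => ⟪f i, g i⟫ :=
  lp.summable_inner (𝕜 := ℝ) (⟨f, hf⟩ : lp (fun _ => F) 2) ⟨g, hg⟩

lemma tsum_inner_sub_comp_sub_one {F : Type*} [NormedAddCommGroup F] [InnerProductSpace ℝ F]
    {φ ψ : ℤ → F} (hφ : Memℓp φ 2) (hψ : Memℓp ψ 2) :
    ∑' i, ⟪φ i, ψ i - ψ (i - 1)⟫ = ∑' i, ⟪φ i - φ (i + 1), ψ i⟫ := by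
  have hψ' : Memℓp (fun i => ψ (i - 1)) 2 := by
    simpa [sub_eq_add_neg] using hψ.comp_add_right (by norm_num) (-1)
  have hφ' : Memℓp (fun i => φ (i + 1)) 2 := hφ.comp_add_right (by norm_num) 1
  have hshift : ∑' i, ⟪φ i, ψ (i - 1)⟫ = ∑' i, ⟪φ (i + 1), ψ i⟫ := by
    simpa using ((Equiv.addRight (1 : ℤ)).tsum_eq fun i => ⟪φ i, ψ (i - 1)⟫).symm
  simp only [inner_sub_right, inner_sub_left]
  rw [(hφ.summable_inner hψ).tsum_sub (hφ.summable_inner hψ'),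
    (hφ.summable_inner hψ).tsum_sub (hφ'.summable_inner hψ), hshift]

lemma summable_mul_of_abs_le {α : Type*} {c f : α → ℝ} {M : ℝ} (hf : Summable fun i => |f i|)
    (hc : ∀ i, |c i| ≤ M) : Summable fun i => c i * f i :=
  .of_norm_bounded (hf.mul_left M) fun i => by
    rw [Real.norm_eq_abs, abs_mul]; exact mul_le_mul_of_nonneg_right (hc i) (abs_nonneg _)

lemma HasSum.three_point {f : ℤ → ℝ} {a : ℝ} (hf : HasSum f a) :
    HasSum (fun j => f (j - 1) + 6 * f j + f (j + 1)) (8 * a) := by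
  have hm : HasSum (fun j => f (j - 1)) a := by
    simpa [Function.comp_def, sub_eq_add_neg] using (Equiv.addRight (-1 : ℤ)).hasSum_iff.2 hf
  have hp : HasSum (fun j => f (j + 1)) a := (Equiv.addRight (1 : ℤ)).hasSum_iff.2 hf
  convert (hm.add (hf.mul_left 6)).add hp using 1
  ring

lemma sum_Icc_comp_add_le {f : ℤ → ℝ} {M : ℝ} (hf : ∀ i, 0 ≤ f i) (hM : ∀ i, f i ≤ M)
    (N : ℕ) {c : ℤ} (hc : |c| ≤ 1) :
    ∑ i ∈ Finset.Icc (-(N : ℤ)) N, f (i + c) ≤ ∑ i ∈ Finset.Icc (-(N : ℤ)) N, f i + 2 * M := by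
  have hshift : ∑ i ∈ Finset.Icc (-(N : ℤ)) N, f (i + c)
      = ∑ j ∈ Finset.Icc (-(N : ℤ) + c) (N + c), f j := by
    rw [← Finset.map_add_right_Icc, Finset.sum_map]; rfl
  have hwide : Finset.Icc (-(N : ℤ) - 1) (N + 1)
      = insert (-(N : ℤ) - 1) (insert ((N : ℤ) + 1) (Finset.Icc (-(N : ℤ)) N)) := by
    ext j; simp only [Finset.mem_Icc, Finset.mem_insert]; omega
  have hsub : Finset.Icc (-(N : ℤ) + c) (N + c) ⊆ Finset.Icc (-(N : ℤ) - 1) (N + 1) :=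
    Finset.Icc_subset_Icc (by linarith [neg_abs_le c]) (by linarith [le_abs_self c])
  rw [hshift]
  refine (Finset.sum_le_sum_of_subset_of_nonneg hsub fun i _ _ => hf i).trans ?_
  rw [hwide, Finset.sum_insert (by simp; omega), Finset.sum_insert (by simp)]
  linarith [hM (-(N : ℤ) - 1), hM ((N : ℤ) + 1)]

lemma hasSum_mul_sub_integral_tsum {ι : Type*} [Countable ι] {A D : ℝ → ι → ℝ} {c : ι → ℝ}
    {s t M B : ℝ} (hst : s ≤ t) (hM : 0 ≤ M) (hc : ∀ i, |c i| ≤ M)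
    (hFTC : ∀ i, ∫ τ in s..t, D τ i = A t i - A s i)
    (hD : ∀ i, ContinuousOn (fun τ => D τ i) (Icc s t))
    (hDsum : ∀ τ ∈ Icc s t, Summable fun i => |D τ i|)
    (hDB : ∀ τ ∈ Icc s t, ∑' i, |D τ i| ≤ B) :
    HasSum (fun i => c i * (A t i - A s i)) (∫ τ in s..t, ∑' i, c i * D τ i) := by
  have hIoc : Ι s t ⊆ Icc s t := by rw [uIoc_of_le hst]; exact Ioc_subset_Icc_self
  have hpartial : ∀ S : Finset ι,
      ∑ i ∈ S, c i * (A t i - A s i) = ∫ τ in s..t, ∑ i ∈ S, c i * D τ i := by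
    intro S
    rw [intervalIntegral.integral_finsetSum (f := fun i τ => c i * D τ i) fun i _ =>
      ((continuousOn_const.mul (hD i)).mono (uIcc_of_le hst).subset).intervalIntegrable]
    simp only [intervalIntegral.integral_const_mul, hFTC]
  unfold HasSum
  simp only [hpartial]
  refine intervalIntegral.tendsto_integral_filter_of_dominated_convergence (fun _ => M * B)
    (.of_forall fun S => ?_) (.of_forall fun S => .of_forall fun τ hτ => ?_)
    intervalIntegrable_const (.of_forall fun τ hτ => ?_)
  · exact ((continuousOn_finsetSum S fun i _ => continuousOn_const.mul (hD i)).mono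
      hIoc).aestronglyMeasurable measurableSet_uIoc
  · have hτ' := hIoc hτ
    calc ‖∑ i ∈ S, c i * D τ i‖ ≤ ∑ i ∈ S, M * |D τ i| := by
          refine (norm_sum_le _ _).trans (Finset.sum_le_sum fun i _ => ?_)
          rw [Real.norm_eq_abs, abs_mul]
          exact mul_le_mul_of_nonneg_right (hc i) (abs_nonneg _)
      _ ≤ M * B := by
          rw [← Finset.mul_sum]
          exact mul_le_mul_of_nonneg_left
            (((hDsum τ hτ').sum_le_tsum S fun i _ => abs_nonneg _).trans (hDB τ hτ')) hM
  · exact (summable_mul_of_abs_le (hDsum τ (hIoc hτ)) hc).hasSum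

lemma le_one_add_div_pow_mul_of_le_one_add_mul_add_sq {f : ℝ → ℝ} {k C a b : ℝ} (hk : 0 ≤ k)
    (hC : 0 ≤ C) (hab : a ≤ b)
    (hf : ∀ s t, a ≤ s → s ≤ t → t ≤ b → f t ≤ (1 + k * (t - s)) * f s + C * (t - s) ^ 2)
    {n : ℕ} (hn : 0 < n) :
    f b ≤ (1 + k * (b - a) / n) ^ n * (f a + C * (b - a) ^ 2 / n) := by
  set δ := (b - a) / n with hδ
  have hδ0 : 0 ≤ δ := div_nonneg (sub_nonneg.2 hab) n.cast_nonneg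
  have hiter : ∀ m ≤ n, f (a + m * δ) ≤ (1 + k * δ) ^ m * (f a + m * C * δ ^ 2) := by
    intro m
    induction m with
    | zero => simp
    | succ m ih =>
      intro hm
      have hmδ : (m + 1 : ℝ) * δ ≤ b - a := by
        rw [hδ, mul_div_assoc', div_le_iff₀ (by exact_mod_cast hn)]
        nlinarith [(by exact_mod_cast hm : (m + 1 : ℝ) ≤ n)]
      have hstep := hf (a + m * δ) (a + (m + 1 : ℕ) * δ) (by nlinarith [m.cast_nonneg (α := ℝ)])
        (by push_cast; nlinarith) (by push_cast; linarith)
      have hlen : a + ((m + 1 : ℕ) : ℝ) * δ - (a + m * δ) = δ := by push_cast; ring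
      rw [hlen] at hstep
      have hpow : 1 ≤ (1 + k * δ) ^ (m + 1) :=
        one_le_pow₀ (le_add_of_nonneg_right (mul_nonneg hk hδ0))
      calc f (a + ((m + 1 : ℕ) : ℝ) * δ)
          ≤ (1 + k * δ) * ((1 + k * δ) ^ m * (f a + m * C * δ ^ 2)) + C * δ ^ 2 :=
            hstep.trans (by gcongr; exact ih (by omega))
        _ = (1 + k * δ) ^ (m + 1) * (f a + m * C * δ ^ 2) + C * δ ^ 2 := by ring
        _ ≤ (1 + k * δ) ^ (m + 1) * (f a + m * C * δ ^ 2) +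
              (1 + k * δ) ^ (m + 1) * (C * δ ^ 2) := by
            linarith [le_mul_of_one_le_left (mul_nonneg hC (sq_nonneg δ)) hpow]
        _ = (1 + k * δ) ^ (m + 1) * (f a + ((m + 1 : ℕ) : ℝ) * C * δ ^ 2) := by push_cast; ring
  have hb : a + (n : ℝ) * δ = b := by rw [hδ]; field_simp; ring
  have := hiter n le_rfl
  rw [hb] at this
  convert this using 2 <;> simp only [hδ] <;> field_simp

lemma le_mul_exp_of_le_one_add_mul_add_sq {f : ℝ → ℝ} {k C a b : ℝ} (hk : 0 ≤ k) (hC : 0 ≤ C)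
    (hab : a ≤ b)
    (hf : ∀ s t, a ≤ s → s ≤ t → t ≤ b → f t ≤ (1 + k * (t - s)) * f s + C * (t - s) ^ 2) :
    f b ≤ f a * Real.exp (k * (b - a)) := by
  have hlim : Tendsto (fun n : ℕ => (1 + k * (b - a) / n) ^ n * (f a + C * (b - a) ^ 2 / n))
      atTop (𝓝 (Real.exp (k * (b - a)) * (f a + 0))) :=
    (Real.tendsto_one_add_div_pow_exp _).mul
      (tendsto_const_nhds.add (tendsto_const_div_atTop_nhds_zero_nat _))
  rw [add_zero, mul_comm (Real.exp _)] at hlim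
  exact ge_of_tendsto hlim ((eventually_gt_atTop 0).mono fun n hn =>
    le_one_add_div_pow_mul_of_le_one_add_mul_add_sq hk hC hab hf hn)

lemma sqrt_mul_le_of_mul_le_mul_exp {a b c x y k : ℝ} (ha : 0 < a) (hb : 0 ≤ b) (hc : 0 ≤ c)
    (hy : 0 ≤ y) (hxy : a * x ≤ b * y * Real.exp (2 * k)) :
    Real.sqrt (c * x) ≤ Real.sqrt (b / a) * Real.sqrt (c * y) * Real.exp k := by
  have hexp : Real.exp (2 * k) = Real.exp k ^ 2 := by rw [sq, ← Real.exp_add, two_mul]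
  have hcx : c * x ≤ b / a * (c * y) * Real.exp k ^ 2 := by
    calc c * x = c / a * (a * x) := by field_simp
      _ ≤ c / a * (b * y * Real.exp (2 * k)) :=
          mul_le_mul_of_nonneg_left hxy (div_nonneg hc ha.le)
      _ = b / a * (c * y) * Real.exp k ^ 2 := by rw [hexp]; ring
  refine (Real.sqrt_le_sqrt hcx).trans_eq ?_
  rw [Real.sqrt_mul (by positivity), Real.sqrt_mul (by positivity),
    Real.sqrt_sq (Real.exp_nonneg _)]

lemma Dm_add_one (h : ℝ) (w : ℤ → E3) (i : ℤ) : Dm h w (i + 1) = Dp h w i := by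
  simp [Dm, Dp]

lemma memℓp_Dm_of_summable {h : ℝ} {w : ℤ → E3} (hw : Summable fun i => ‖Dp h w i‖ ^ 2) :
    Memℓp (Dm h w) 2 := by
  rw [memℓp_two_iff, ← (Equiv.addRight (1 : ℤ)).summable_iff]
  simpa [Function.comp_def, Dm_add_one] using hw

lemma normh_Dp (h : ℝ) (w : ℤ → E3) :
    normh h (Dp h w) = Real.sqrt (h * ∑' j, ‖Dm h w j‖ ^ 2) := by
  have hshift := (Equiv.addRight (1 : ℤ)).tsum_eq fun j => ‖Dm h w j‖ ^ 2
  simp only [Equiv.coe_addRight, Dm_add_one] at hshift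
  rw [normh, hshift]

def gh (g : ℝ → ℝ → ℝ) (h t : ℝ) (j : ℤ) : ℝ := g t (j * h)

section Slice

variable {g : ℝ → ℝ → ℝ} {h β t : ℝ} {w : ℤ → E3}

lemma norm_Dp_le (hh : 0 < h) (v : ℤ → E3) (i : ℤ) :
    ‖Dp h v i‖ ≤ h⁻¹ * (‖v (i + 1)‖ + ‖v i‖) := by
  rw [Dp, norm_smul, Real.norm_eq_abs, abs_inv, abs_of_pos hh]
  exact mul_le_mul_of_nonneg_left (norm_sub_le _ _) (inv_nonneg.2 hh.le)

lemma norm_Dm_le (hh : 0 < h) (v : ℤ → E3) (i : ℤ) :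
    ‖Dm h v i‖ ≤ h⁻¹ * (‖v i‖ + ‖v (i - 1)‖) := by
  rw [Dm, norm_smul, Real.norm_eq_abs, abs_inv, abs_of_pos hh]
  exact mul_le_mul_of_nonneg_left (norm_sub_le _ _) (inv_nonneg.2 hh.le)

lemma norm_gh_smul_le (hg : ∀ x, |g t x| ≤ β) (j : ℤ) (v : E3) :
    ‖gh g h t j • v‖ ≤ β * ‖v‖ := by
  rw [norm_smul, Real.norm_eq_abs]
  exact mul_le_mul_of_nonneg_right (hg _) (norm_nonneg _)

lemma norm_rhsD_le (hh : 0 < h) (hw : ∀ i, ‖w i‖ ≤ 1) (hg : ∀ x, |g t x| ≤ β) (i : ℤ) :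
    ‖rhsD g h w t i‖ ≤ β / h * (‖Dm h w (i + 1)‖ + ‖Dm h w i‖) := by
  calc ‖rhsD g h w t i‖ ≤ 1 * ‖Dp h (fun j => gh g h t j • Dm h w j) i‖ :=
        (norm_cross_le _ _).trans (mul_le_mul_of_nonneg_right (hw i) (norm_nonneg _))
    _ ≤ h⁻¹ * (β * ‖Dm h w (i + 1)‖ + β * ‖Dm h w i‖) := by
        rw [one_mul]
        refine (norm_Dp_le hh _ i).trans (mul_le_mul_of_nonneg_left ?_ (inv_nonneg.2 hh.le))
        exact add_le_add (norm_gh_smul_le hg _ _) (norm_gh_smul_le hg _ _)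
    _ = β / h * (‖Dm h w (i + 1)‖ + ‖Dm h w i‖) := by ring

lemma abs_two_mul_inner_Dm_rhsD_le (hh : 0 < h) (hw : ∀ i, ‖w i‖ ≤ 1)
    (hg : ∀ x, |g t x| ≤ β) (j : ℤ) :
    |2 * ⟪Dm h w j, Dm h (rhsD g h w t) j⟫| ≤
      β / h ^ 2 * (‖Dm h w (j - 1)‖ ^ 2 + 6 * ‖Dm h w j‖ ^ 2 + ‖Dm h w (j + 1)‖ ^ 2) := by
  have hβ : 0 ≤ β := (abs_nonneg _).trans (hg 0)
  set a := ‖Dm h w (j - 1)‖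
  set b := ‖Dm h w j‖
  set c := ‖Dm h w (j + 1)‖
  have hR : ‖Dm h (rhsD g h w t) j‖ ≤ β / h ^ 2 * (c + 2 * b + a) := by
    refine (norm_Dm_le hh _ j).trans ?_
    have h1 := norm_rhsD_le hh hw hg j
    have h2 := norm_rhsD_le hh hw hg (j - 1)
    rw [sub_add_cancel] at h2
    calc h⁻¹ * (‖rhsD g h w t j‖ + ‖rhsD g h w t (j - 1)‖)
        ≤ h⁻¹ * (β / h * (c + b) + β / h * (b + a)) :=
          mul_le_mul_of_nonneg_left (add_le_add h1 h2) (inv_nonneg.2 hh.le)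
      _ = β / h ^ 2 * (c + 2 * b + a) := by field_simp; ring
  have hq : 0 ≤ β / h ^ 2 := by positivity
  rw [abs_mul, abs_two]
  calc 2 * |⟪Dm h w j, Dm h (rhsD g h w t) j⟫| ≤ 2 * (b * (β / h ^ 2 * (c + 2 * b + a))) := by
        gcongr
        exact (abs_real_inner_le_norm _ _).trans (mul_le_mul_of_nonneg_left hR (norm_nonneg _))
    _ ≤ β / h ^ 2 * (a ^ 2 + 6 * b ^ 2 + c ^ 2) := by
        nlinarith [mul_nonneg hq (sq_nonneg (a - b)), mul_nonneg hq (sq_nonneg (b - c))]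

lemma memℓp_rhsD (hh : 0 < h) (hw : ∀ i, ‖w i‖ ≤ 1) (hg : ∀ x, |g t x| ≤ β)
    (hD : Memℓp (Dm h w) 2) : Memℓp (rhsD g h w t) 2 := by
  have hmaj : Memℓp (fun i => β / h * (‖Dm h w (i + 1)‖ + ‖Dm h w i‖)) 2 :=
    ((hD.norm.comp_add_right (by norm_num) 1).add hD.norm).const_mul (β / h)
  exact hmaj.mono (norm_rhsD_le hh hw hg)

lemma tsum_gh_mul_inner_Dm_rhsD (hh : 0 < h) (hw : ∀ i, ‖w i‖ ≤ 1)
    (hg : ∀ x, |g t x| ≤ β) (hD : Memℓp (Dm h w) 2) :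
    ∑' j, gh g h t j * ⟪Dm h w j, Dm h (rhsD g h w t) j⟫ = 0 := by
  set ψ : ℤ → E3 := fun j => gh g h t j • Dm h w j
  set R := rhsD g h w t
  have hψ : Memℓp ψ 2 := (hD.norm.const_mul β).mono fun j => norm_gh_smul_le hg j _
  have hterm : ∀ j, gh g h t j * ⟪Dm h w j, Dm h R j⟫ = h⁻¹ * ⟪ψ j, R j - R (j - 1)⟫ := by
    intro j
    simp only [ψ, Dm, inner_smul_left, inner_smul_right, RCLike.conj_to_real]
    ring
  -- after summation by parts, `ψ j - ψ (j + 1) = -h D⁺ψ j` is orthogonal to `R j = w j ∧ D⁺ψ j`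
  have hcross : ∀ j, ⟪ψ j - ψ (j + 1), R j⟫ = 0 := by
    intro j
    have hdiff : ψ j - ψ (j + 1) = (-h) • Dp h ψ j := by
      simp only [Dp, smul_smul, neg_mul, mul_inv_cancel₀ hh.ne', neg_smul, one_smul, neg_sub]
    rw [hdiff, real_inner_smul_left]
    exact mul_eq_zero_of_right _ (inner_cross_self_right (w j) (Dp h ψ j))
  rw [tsum_congr hterm, tsum_mul_left, tsum_inner_sub_comp_sub_one hψ (memℓp_rhsD hh hw hg hD),
    tsum_congr hcross, tsum_zero, mul_zero]

end Slice

structure IsSemiDiscreteSolution (g : ℝ → ℝ → ℝ) (h : ℝ) (u : ℝ → ℤ → E3) : Prop where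
  hasDerivWithinAt : ∀ t ∈ Ici (0 : ℝ), ∀ i,
    HasDerivWithinAt (fun s => u s i) (rhsD g h (u t) t i) (Ici 0) t
  continuousOn_rhsD : ∀ i, ContinuousOn (fun t => rhsD g h (u t) t i) (Ici 0)
  norm_le_one : ∀ t ∈ Ici (0 : ℝ), ∀ i, ‖u t i‖ ≤ 1
  memℓp_Dm : ∀ t ∈ Ici (0 : ℝ), Memℓp (Dm h (u t)) 2

-- Energies use `D⁻`, so that the flux `g_h D⁻u` inside `rhsD` appears; `normh_Dp` returns to `D⁺`.
def dmSq (h : ℝ) (u : ℝ → ℤ → E3) (t : ℝ) (j : ℤ) : ℝ := ‖Dm h (u t) j‖ ^ 2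

def dmSqDeriv (g : ℝ → ℝ → ℝ) (h : ℝ) (u : ℝ → ℤ → E3) (t : ℝ) (j : ℤ) : ℝ :=
  2 * ⟪Dm h (u t) j, Dm h (rhsD g h (u t) t) j⟫

def gradEnergy (h : ℝ) (u : ℝ → ℤ → E3) (t : ℝ) : ℝ := ∑' j, dmSq h u t j

def weightedEnergy (g : ℝ → ℝ → ℝ) (h : ℝ) (u : ℝ → ℤ → E3) (t : ℝ) : ℝ :=
  ∑' j, gh g h t j * dmSq h u t j

lemma dmSq_nonneg (h : ℝ) (u : ℝ → ℤ → E3) (t : ℝ) (j : ℤ) : 0 ≤ dmSq h u t j := sq_nonneg _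

lemma gradEnergy_nonneg (h : ℝ) (u : ℝ → ℤ → E3) (t : ℝ) : 0 ≤ gradEnergy h u t :=
  tsum_nonneg (dmSq_nonneg h u t)

namespace IsSemiDiscreteSolution

variable {g : ℝ → ℝ → ℝ} {h β β₁ : ℝ} {u : ℝ → ℤ → E3}

lemma summable_dmSq (hu : IsSemiDiscreteSolution g h u) {t : ℝ} (ht : 0 ≤ t) :
    Summable (dmSq h u t) :=
  memℓp_two_iff.1 (hu.memℓp_Dm t ht)

lemma hasDerivWithinAt_dmSq (hu : IsSemiDiscreteSolution g h u) {t : ℝ} (ht : 0 ≤ t) (j : ℤ) :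
    HasDerivWithinAt (fun s => dmSq h u s j) (dmSqDeriv g h u t j) (Ici 0) t :=
  (((hu.hasDerivWithinAt t ht j).sub (hu.hasDerivWithinAt t ht (j - 1))).const_smul h⁻¹).norm_sq

lemma continuousOn_dmSqDeriv (hu : IsSemiDiscreteSolution g h u) (j : ℤ) :
    ContinuousOn (fun t => dmSqDeriv g h u t j) (Ici 0) := by
  have hDm : ContinuousOn (fun t => Dm h (u t) j) (Ici 0) := fun t ht =>
    (((hu.hasDerivWithinAt t ht j).sub
      (hu.hasDerivWithinAt t ht (j - 1))).const_smul h⁻¹).continuousWithinAt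
  have hDmR : ContinuousOn (fun t => Dm h (rhsD g h (u t) t) j) (Ici 0) :=
    ((hu.continuousOn_rhsD j).sub (hu.continuousOn_rhsD (j - 1))).const_smul h⁻¹
  exact continuousOn_const.mul (hDm.inner hDmR)

lemma integral_dmSqDeriv (hu : IsSemiDiscreteSolution g h u) {s t : ℝ} (hs : 0 ≤ s) (hst : s ≤ t)
    (j : ℤ) : ∫ τ in s..t, dmSqDeriv g h u τ j = dmSq h u t j - dmSq h u s j := by
  have hsub : Icc s t ⊆ Ici 0 := fun x hx => hs.trans hx.1
  exact intervalIntegral.integral_eq_sub_of_hasDeriv_right_of_le hst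
    (fun x hx => (hu.hasDerivWithinAt_dmSq (hsub hx) j).continuousWithinAt.mono hsub)
    (fun x hx => (hu.hasDerivWithinAt_dmSq (hsub (Ioo_subset_Icc_self hx)) j).mono_of_mem_nhdsWithin
      (mem_nhdsWithin_of_mem_nhds (Ici_mem_nhds (hs.trans_lt hx.1))))
    (((hu.continuousOn_dmSqDeriv j).mono hsub).intervalIntegrable_of_Icc hst)

lemma abs_dmSqDeriv_le (hu : IsSemiDiscreteSolution g h u) (hh : 0 < h) {t : ℝ} (ht : 0 ≤ t)
    (hg : ∀ x, |g t x| ≤ β) (j : ℤ) :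
    |dmSqDeriv g h u t j| ≤
      β / h ^ 2 * (dmSq h u t (j - 1) + 6 * dmSq h u t j + dmSq h u t (j + 1)) :=
  abs_two_mul_inner_Dm_rhsD_le hh (hu.norm_le_one t ht) hg j

lemma summable_abs_dmSqDeriv (hu : IsSemiDiscreteSolution g h u) (hh : 0 < h) {t : ℝ}
    (ht : 0 ≤ t) (hg : ∀ x, |g t x| ≤ β) : Summable fun j => |dmSqDeriv g h u t j| :=
  ((hu.summable_dmSq ht).hasSum.three_point.mul_left _).summable.of_nonneg_of_le
    (fun _ => abs_nonneg _) (hu.abs_dmSqDeriv_le hh ht hg)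

lemma tsum_abs_dmSqDeriv_le (hu : IsSemiDiscreteSolution g h u) (hh : 0 < h) {t : ℝ}
    (ht : 0 ≤ t) (hg : ∀ x, |g t x| ≤ β) :
    ∑' j, |dmSqDeriv g h u t j| ≤ 8 * β / h ^ 2 * gradEnergy h u t := by
  have hmaj := (hu.summable_dmSq ht).hasSum.three_point.mul_left (β / h ^ 2)
  refine (hasSum_le (hu.abs_dmSqDeriv_le hh ht hg) (hu.summable_abs_dmSqDeriv hh ht hg).hasSum
    hmaj).trans_eq ?_
  rw [gradEnergy]; ring

lemma dmSq_le (hu : IsSemiDiscreteSolution g h u) (hh : 0 < h) {t : ℝ} (ht : 0 ≤ t) (j : ℤ) :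
    dmSq h u t j ≤ 4 / h ^ 2 := by
  have hn := hu.norm_le_one t ht
  have hD : ‖Dm h (u t) j‖ ≤ 2 / h := by
    refine (norm_Dm_le hh _ j).trans ?_
    rw [div_eq_inv_mul]
    exact mul_le_mul_of_nonneg_left (by linarith [hn j, hn (j - 1)]) (inv_nonneg.2 hh.le)
  calc dmSq h u t j ≤ (2 / h) ^ 2 := pow_le_pow_left₀ (norm_nonneg _) hD 2
    _ = 4 / h ^ 2 := by ring

-- Shifting the window by one costs two boundary terms, each at most `4 / h²` since `|u| ≤ 1`.
lemma sum_Icc_abs_dmSqDeriv_le (hu : IsSemiDiscreteSolution g h u) (hh : 0 < h) {t : ℝ}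
    (ht : 0 ≤ t) (hg : ∀ x, |g t x| ≤ β) (N : ℕ) :
    ∑ j ∈ Finset.Icc (-(N : ℤ)) N, |dmSqDeriv g h u t j| ≤
      8 * β / h ^ 2 * ∑ j ∈ Finset.Icc (-(N : ℤ)) N, dmSq h u t j + 16 * β / h ^ 4 := by
  have hβ : 0 ≤ β := (abs_nonneg _).trans (hg 0)
  have hshift (c : ℤ) (hc : |c| ≤ 1) := sum_Icc_comp_add_le (dmSq_nonneg h u t)
    (hu.dmSq_le hh ht) N hc
  have hm := hshift (-1) (by norm_num)
  have hp := hshift 1 (by norm_num)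
  simp only [← sub_eq_add_neg] at hm
  calc ∑ j ∈ Finset.Icc (-(N : ℤ)) N, |dmSqDeriv g h u t j|
      ≤ ∑ j ∈ Finset.Icc (-(N : ℤ)) N,
          β / h ^ 2 * (dmSq h u t (j - 1) + 6 * dmSq h u t j + dmSq h u t (j + 1)) :=
        Finset.sum_le_sum fun j _ => hu.abs_dmSqDeriv_le hh ht hg j
    _ = β / h ^ 2 * (∑ j ∈ Finset.Icc (-(N : ℤ)) N, dmSq h u t (j - 1) +
          6 * ∑ j ∈ Finset.Icc (-(N : ℤ)) N, dmSq h u t j +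
          ∑ j ∈ Finset.Icc (-(N : ℤ)) N, dmSq h u t (j + 1)) := by
        rw [← Finset.mul_sum, Finset.sum_add_distrib, Finset.sum_add_distrib, Finset.mul_sum]
    _ ≤ 8 * β / h ^ 2 * ∑ j ∈ Finset.Icc (-(N : ℤ)) N, dmSq h u t j + 16 * β / h ^ 4 := by
        have hq : 0 ≤ β / h ^ 2 := by positivity
        have := mul_le_mul_of_nonneg_left (add_le_add hm hp) hq
        field_simp at this ⊢
        nlinarith

lemma gradEnergy_le_gronwallBound (hu : IsSemiDiscreteSolution g h u) (hh : 0 < h)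
    (hg : ∀ t ≥ 0, ∀ x, |g t x| ≤ β) {t : ℝ} (ht : 0 ≤ t) :
    gradEnergy h u t ≤ gronwallBound (gradEnergy h u 0) (8 * β / h ^ 2) (16 * β / h ^ 4) t := by
  have hpartial : ∀ N : ℕ, ∑ j ∈ Finset.Icc (-(N : ℤ)) N, dmSq h u t j ≤
      gronwallBound (gradEnergy h u 0) (8 * β / h ^ 2) (16 * β / h ^ 4) t := by
    intro N
    have hderiv : ∀ x, 0 ≤ x →
        HasDerivWithinAt (fun s => ∑ j ∈ Finset.Icc (-(N : ℤ)) N, dmSq h u s j)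
          (∑ j ∈ Finset.Icc (-(N : ℤ)) N, dmSqDeriv g h u x j) (Ici 0) x := fun x hx =>
      HasDerivWithinAt.fun_sum fun j _ => hu.hasDerivWithinAt_dmSq hx j
    have hnonneg : ∀ x, 0 ≤ ∑ j ∈ Finset.Icc (-(N : ℤ)) N, dmSq h u x j := fun x =>
      Finset.sum_nonneg fun j _ => dmSq_nonneg h u x j
    have := norm_le_gronwallBound_of_norm_deriv_right_le (δ := gradEnergy h u 0)
      (K := 8 * β / h ^ 2) (ε := 16 * β / h ^ 4)
      (fun x hx => (hderiv x hx.1).continuousWithinAt.mono fun y hy => hy.1)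
      (fun x hx => (hderiv x hx.1).mono fun y hy => hx.1.trans hy) ?_ ?_ t ⟨ht, le_rfl⟩
    · rwa [Real.norm_of_nonneg (hnonneg t), sub_zero] at this
    · rw [Real.norm_of_nonneg (hnonneg 0)]
      exact (hu.summable_dmSq le_rfl).sum_le_tsum _ fun j _ => dmSq_nonneg h u 0 j
    · intro x hx
      rw [Real.norm_of_nonneg (hnonneg x), Real.norm_eq_abs]
      exact (Finset.abs_sum_le_sum_abs _ _).trans
        (hu.sum_Icc_abs_dmSqDeriv_le hh hx.1 (hg x hx.1) N)
  exact le_of_tendsto' ((hu.summable_dmSq ht).hasSum.comp Finset.tendsto_Icc_neg) hpartial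

lemma tsum_gh_mul_dmSqDeriv (hu : IsSemiDiscreteSolution g h u) (hh : 0 < h) {t : ℝ}
    (ht : 0 ≤ t) (hg : ∀ x, |g t x| ≤ β) : ∑' j, gh g h t j * dmSqDeriv g h u t j = 0 := by
  simp only [dmSqDeriv, mul_left_comm _ (2 : ℝ)]
  rw [tsum_mul_left, tsum_gh_mul_inner_Dm_rhsD hh (hu.norm_le_one t ht) hg (hu.memℓp_Dm t ht),
    mul_zero]

lemma abs_tsum_mul_dmSqDeriv_le (hu : IsSemiDiscreteSolution g h u) (hh : 0 < h) {t : ℝ}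
    (ht : 0 ≤ t) (hg : ∀ x, |g t x| ≤ β) {c : ℤ → ℝ} {ε : ℝ}
    (hc : ∀ j, |c j - gh g h t j| ≤ ε) :
    |∑' j, c j * dmSqDeriv g h u t j| ≤ ε * ∑' j, |dmSqDeriv g h u t j| := by
  have hD := hu.summable_abs_dmSqDeriv hh ht hg
  have hdiff : Summable fun j => (c j - gh g h t j) * dmSqDeriv g h u t j :=
    summable_mul_of_abs_le hD hc
  have habs : ∀ j, |(c j - gh g h t j) * dmSqDeriv g h u t j| ≤ ε * |dmSqDeriv g h u t j| :=
    fun j => by rw [abs_mul]; exact mul_le_mul_of_nonneg_right (hc j) (abs_nonneg _)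
  have hsplit : ∑' j, c j * dmSqDeriv g h u t j =
      ∑' j, (c j - gh g h t j) * dmSqDeriv g h u t j := by
    rw [← add_zero (∑' j, (c j - gh g h t j) * dmSqDeriv g h u t j),
      ← hu.tsum_gh_mul_dmSqDeriv hh ht hg,
      ← hdiff.tsum_add (summable_mul_of_abs_le (c := gh g h t) hD fun j => hg _)]
    exact tsum_congr fun j => by ring
  rw [hsplit, ← tsum_mul_left]
  have hnorm := norm_tsum_le_tsum_norm hdiff.norm
  simp only [Real.norm_eq_abs] at hnorm
  exact hnorm.trans (hdiff.abs.tsum_mono (hD.mul_left ε) habs)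

lemma tsum_gh_mul_dmSq_sub_le (hu : IsSemiDiscreteSolution g h u) (hh : 0 < h)
    (hg : ∀ t ≥ 0, ∀ x, |g t x| ≤ β)
    (hglip : ∀ t s x, 0 ≤ t → 0 ≤ s → |g t x - g s x| ≤ β₁ * |t - s|) (hβ₁ : 0 ≤ β₁)
    {s t B : ℝ} (hs : 0 ≤ s) (hst : s ≤ t) (hB : ∀ τ ∈ Icc s t, gradEnergy h u τ ≤ B) :
    ∑' j, gh g h t j * (dmSq h u t j - dmSq h u s j) ≤
      β₁ * (8 * β / h ^ 2 * B) * (t - s) ^ 2 := by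
  have hβ : 0 ≤ β := (abs_nonneg _).trans (hg 0 le_rfl 0)
  have hK : 0 ≤ 8 * β / h ^ 2 := by positivity
  have hτ : ∀ τ ∈ Icc s t, 0 ≤ τ := fun τ hτ => hs.trans hτ.1
  have hDB : ∀ τ ∈ Icc s t, ∑' j, |dmSqDeriv g h u τ j| ≤ 8 * β / h ^ 2 * B := fun τ hτ' =>
    (hu.tsum_abs_dmSqDeriv_le hh (hτ τ hτ') (hg τ (hτ τ hτ'))).trans
      (mul_le_mul_of_nonneg_left (hB τ hτ') hK)
  rw [(hasSum_mul_sub_integral_tsum (c := gh g h t) hst hβ (fun j => hg t (hs.trans hst) _)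
    (hu.integral_dmSqDeriv hs hst) (fun j => (hu.continuousOn_dmSqDeriv j).mono hτ)
    (fun τ hτ' => hu.summable_abs_dmSqDeriv hh (hτ τ hτ') (hg τ (hτ τ hτ'))) hDB).tsum_eq]
  have hintegrand : ∀ τ ∈ Ι s t, ‖∑' j, gh g h t j * dmSqDeriv g h u τ j‖ ≤
      β₁ * (t - s) * (8 * β / h ^ 2 * B) := by
    intro τ hτ'
    rw [uIoc_of_le hst] at hτ'
    have hτ0 := hτ τ (Ioc_subset_Icc_self hτ')
    have hc : ∀ j, |gh g h t j - gh g h τ j| ≤ β₁ * (t - s) := fun j => by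
      have := hglip t τ (j * h) (hs.trans hst) hτ0
      rw [abs_of_nonneg (sub_nonneg.2 hτ'.2)] at this
      exact this.trans (mul_le_mul_of_nonneg_left (by linarith [hτ'.1]) hβ₁)
    rw [Real.norm_eq_abs]
    exact (hu.abs_tsum_mul_dmSqDeriv_le hh hτ0 (hg τ hτ0) hc).trans
      (mul_le_mul_of_nonneg_left (hDB τ (Ioc_subset_Icc_self hτ'))
        (mul_nonneg hβ₁ (sub_nonneg.2 hst)))
  have := intervalIntegral.norm_integral_le_of_norm_le_const hintegrand
  rw [abs_of_nonneg (sub_nonneg.2 hst)] at this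
  calc _ ≤ _ := le_abs_self _
    _ ≤ β₁ * (t - s) * (8 * β / h ^ 2 * B) * (t - s) := this
    _ = β₁ * (8 * β / h ^ 2 * B) * (t - s) ^ 2 := by ring

lemma mul_gradEnergy_le_weightedEnergy (hu : IsSemiDiscreteSolution g h u) {α t : ℝ}
    (ht : 0 ≤ t) (hgl : ∀ x, α ≤ g t x) (hg : ∀ x, |g t x| ≤ β) :
    α * gradEnergy h u t ≤ weightedEnergy g h u t := by
  have hA := hu.summable_dmSq ht
  rw [gradEnergy, ← tsum_mul_left]
  exact (hA.mul_left α).tsum_mono (summable_mul_of_abs_le hA.abs fun j => hg _)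
    fun j => mul_le_mul_of_nonneg_right (hgl _) (dmSq_nonneg h u t j)

lemma weightedEnergy_le_mul_gradEnergy (hu : IsSemiDiscreteSolution g h u) {t : ℝ}
    (ht : 0 ≤ t) (hg : ∀ x, |g t x| ≤ β) :
    weightedEnergy g h u t ≤ β * gradEnergy h u t := by
  have hA := hu.summable_dmSq ht
  rw [gradEnergy, ← tsum_mul_left]
  exact (summable_mul_of_abs_le hA.abs fun j => hg _).tsum_mono (hA.mul_left β)
    fun j => mul_le_mul_of_nonneg_right ((le_abs_self _).trans (hg _)) (dmSq_nonneg h u t j)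

lemma weightedEnergy_le (hu : IsSemiDiscreteSolution g h u) (hh : 0 < h) {α : ℝ} (hα : 0 < α)
    (hgl : ∀ t x, 0 ≤ t → α ≤ g t x) (hg : ∀ t ≥ 0, ∀ x, |g t x| ≤ β)
    (hglip : ∀ t s x, 0 ≤ t → 0 ≤ s → |g t x - g s x| ≤ β₁ * |t - s|) (hβ₁ : 0 ≤ β₁)
    {s t B : ℝ} (hs : 0 ≤ s) (hst : s ≤ t) (hB : ∀ τ ∈ Icc s t, gradEnergy h u τ ≤ B) :
    weightedEnergy g h u t ≤
      (1 + β₁ / α * (t - s)) * weightedEnergy g h u s +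
        β₁ * (8 * β / h ^ 2 * B) * (t - s) ^ 2 := by
  have ht : 0 ≤ t := hs.trans hst
  have hAs := hu.summable_dmSq hs
  have hAt := hu.summable_dmSq ht
  have hgt : ∀ j, |gh g h t j| ≤ β := fun j => hg t ht _
  have hgs : ∀ j, |gh g h s j| ≤ β := fun j => hg s hs _
  have hdg : ∀ j, |gh g h t j - gh g h s j| ≤ β₁ * (t - s) := fun j => by
    have := hglip t s (j * h) ht hs
    rwa [abs_of_nonneg (sub_nonneg.2 hst)] at this
  have hsplit : weightedEnergy g h u t - weightedEnergy g h u s =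
      ∑' j, (gh g h t j - gh g h s j) * dmSq h u s j +
        ∑' j, gh g h t j * (dmSq h u t j - dmSq h u s j) := by
    rw [weightedEnergy, weightedEnergy,
      ← (summable_mul_of_abs_le hAt.abs hgt).tsum_sub (summable_mul_of_abs_le hAs.abs hgs),
      ← (summable_mul_of_abs_le hAs.abs hdg).tsum_add
        (summable_mul_of_abs_le (hAt.sub hAs).abs hgt)]
    exact tsum_congr fun j => by ring
  have hweights : ∑' j, (gh g h t j - gh g h s j) * dmSq h u s j ≤
      β₁ * (t - s) * gradEnergy h u s := by
    rw [gradEnergy, ← tsum_mul_left]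
    exact (summable_mul_of_abs_le hAs.abs hdg).tsum_mono (hAs.mul_left _) fun j =>
      mul_le_mul_of_nonneg_right ((le_abs_self _).trans (hdg j)) (dmSq_nonneg h u s j)
  have hαS := hu.mul_gradEnergy_le_weightedEnergy hs (fun x => hgl s x hs) (hg s hs)
  have hS : β₁ * (t - s) * gradEnergy h u s ≤ β₁ / α * (t - s) * weightedEnergy g h u s := by
    calc β₁ * (t - s) * gradEnergy h u s = β₁ * (t - s) / α * (α * gradEnergy h u s) := by
          field_simp
      _ ≤ β₁ * (t - s) / α * weightedEnergy g h u s :=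
          mul_le_mul_of_nonneg_left hαS (div_nonneg (mul_nonneg hβ₁ (sub_nonneg.2 hst)) hα.le)
      _ = β₁ / α * (t - s) * weightedEnergy g h u s := by ring
  linarith [hu.tsum_gh_mul_dmSq_sub_le hh hg hglip hβ₁ hs hst hB]

theorem mul_gradEnergy_le (hu : IsSemiDiscreteSolution g h u) (hh : 0 < h) {α : ℝ} (hα : 0 < α)
    (hgl : ∀ t x, 0 ≤ t → α ≤ g t x) (hg : ∀ t ≥ 0, ∀ x, |g t x| ≤ β)
    (hglip : ∀ t s x, 0 ≤ t → 0 ≤ s → |g t x - g s x| ≤ β₁ * |t - s|) {T : ℝ} (hT : 0 ≤ T) :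
    α * gradEnergy h u T ≤ β * gradEnergy h u 0 * Real.exp (β₁ / α * T) := by
  have hβ : 0 ≤ β := (abs_nonneg _).trans (hg 0 le_rfl 0)
  have hβ₁ : 0 ≤ β₁ := by simpa using (abs_nonneg _).trans (hglip 1 0 0 zero_le_one le_rfl)
  set B := gronwallBound (gradEnergy h u 0) (8 * β / h ^ 2) (16 * β / h ^ 4) T
  have hB : ∀ τ ∈ Icc 0 T, gradEnergy h u τ ≤ B := fun τ hτ =>
    (hu.gradEnergy_le_gronwallBound hh hg hτ.1).trans
      (gronwallBound_mono (gradEnergy_nonneg h u 0) (by positivity) (by positivity) hτ.2)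
  have hB0 : 0 ≤ B := (gradEnergy_nonneg h u 0).trans (hB 0 ⟨le_rfl, hT⟩)
  have hF := le_mul_exp_of_le_one_add_mul_add_sq (div_nonneg hβ₁ hα.le)
    (by positivity : 0 ≤ β₁ * (8 * β / h ^ 2 * B)) hT fun s t hs hst htT =>
      hu.weightedEnergy_le hh hα hgl hg hglip hβ₁ hs hst fun τ hτ =>
        hB τ ⟨hs.trans hτ.1, hτ.2.trans htT⟩
  rw [sub_zero] at hF
  calc α * gradEnergy h u T ≤ weightedEnergy g h u T :=
        hu.mul_gradEnergy_le_weightedEnergy hT (fun x => hgl T x hT) (hg T hT)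
    _ ≤ weightedEnergy g h u 0 * Real.exp (β₁ / α * T) := hF
    _ ≤ β * gradEnergy h u 0 * Real.exp (β₁ / α * T) :=
        mul_le_mul_of_nonneg_right (hu.weightedEnergy_le_mul_gradEnergy le_rfl (hg 0 le_rfl))
          (Real.exp_nonneg _)

end IsSemiDiscreteSolution

theorem statement16_general (h : ℝ) (hh : 0 < h)
    (u₀ : ℤ → E3)
    (g : ℝ → ℝ → ℝ) (α β β₁ : ℝ) (hα : 0 < α)
    (hgl : ∀ t x, 0 ≤ t → α ≤ g t x) (hgu : ∀ t x, 0 ≤ t → g t x ≤ β)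
    (hglip : ∀ t s x, 0 ≤ t → 0 ≤ s → |g t x - g s x| ≤ β₁ * |t - s|)
    (u : ℝ → ℤ → E3) (hu0 : ∀ i, u 0 i = u₀ i)
    (hode : ∀ t ∈ Ici (0:ℝ), ∀ i,
      HasDerivWithinAt (fun s => u s i) (rhsD g h (u t) t i) (Ici 0) t)
    (hcont : ∀ i, ContinuousOn (fun t => rhsD g h (u t) t i) (Ici 0))
    (hnorm : ∀ t ∈ Ici (0:ℝ), ∀ i, ‖u t i‖ = 1)
    (hsum : ∀ t ∈ Ici (0:ℝ), Summable fun i : ℤ => ‖Dp h (u t) i‖ ^ 2) :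
    ∀ t ∈ Ici (0:ℝ),
      normh h (Dp h (u t)) ≤
        Real.sqrt (β / α) * normh h (Dp h u₀) * Real.exp (β₁ * t / (2 * α)) := by
  intro T hT
  have hg : ∀ t ≥ 0, ∀ x, |g t x| ≤ β := fun t ht x =>
    abs_le.2 ⟨by linarith [hgl t x ht, hgu t x ht], hgu t x ht⟩
  have hu : IsSemiDiscreteSolution g h u :=
    ⟨hode, hcont, fun t ht i => (hnorm t ht i).le, fun t ht => memℓp_Dm_of_summable (hsum t ht)⟩
  have henergy := hu.mul_gradEnergy_le hh hα hgl hg hglip hT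
  rw [show β₁ / α * T = 2 * (β₁ * T / (2 * α)) by field_simp] at henergy
  rw [normh_Dp, normh_Dp, ← funext hu0]
  exact sqrt_mul_le_of_mul_le_mul_exp hα ((abs_nonneg _).trans (hg 0 le_rfl 0)) hh.le
    (gradEnergy_nonneg h u 0) henergy

/-- A priori bound for the semi-discrete system: any `C¹` solution
with unit-norm values and `D⁺u(t) ∈ L²ₕ` satisfies
`|D⁺u(t)|ₕ ≤ √(β/α) |D⁺u⁰|ₕ exp(β₁ t/(2α))` for all `t ≥ 0`. -/
theorem statement16 (h : ℝ) (hh : 0 < h)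
    (u₀ : ℤ → E3) (hs : ∀ i, ‖u₀ i‖ = 1) (hd : Summable fun i : ℤ => ‖Dp h u₀ i‖ ^ 2)
    (g : ℝ → ℝ → ℝ) (α β β₁ : ℝ) (hα : 0 < α)
    (hgl : ∀ t x, 0 ≤ t → α ≤ g t x) (hgu : ∀ t x, 0 ≤ t → g t x ≤ β)
    (hglip : ∀ t s x, 0 ≤ t → 0 ≤ s → |g t x - g s x| ≤ β₁ * |t - s|)
    (u : ℝ → ℤ → E3) (hu0 : ∀ i, u 0 i = u₀ i)
    (hode : ∀ t ∈ Ici (0:ℝ), ∀ i,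
      HasDerivWithinAt (fun s => u s i) (rhsD g h (u t) t i) (Ici 0) t)
    (hcont : ∀ i, ContinuousOn (fun t => rhsD g h (u t) t i) (Ici 0))
    (hnorm : ∀ t ∈ Ici (0:ℝ), ∀ i, ‖u t i‖ = 1)
    (hsum : ∀ t ∈ Ici (0:ℝ), Summable fun i : ℤ => ‖Dp h (u t) i‖ ^ 2) :
    ∀ t ∈ Ici (0:ℝ),
      normh h (Dp h (u t)) ≤
        Real.sqrt (β / α) * normh h (Dp h u₀) * Real.exp (β₁ * t / (2 * α)) :=
  statement16_general h hh u₀ g α β β₁ hα hgl hgu hglip u hu0 hode hcont hnorm hsum
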